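/- arXiv:2403.19437 — 6 statements merged into one kernel-verified Lean document; each statement's English description precedes it below -/
import Mathlib

section
/- If (Ω, 𝒜, μ) is an atom-free σ-finite measure space, then for every A ∈ 𝒜 and every t ∈ [0, μ(A)] there exists B ∈ 𝒜 with B ⊆ A and μ(B) = t. -/
/-!
Greedy exhaustion. Repeatedly adding to `B` a subset of `A \ B` of at least half the largest
admissible measure (one keeping `μ B ≤ t`) yields, in the limit, a set `B ⊆ A` with `μ B ≤ t`
such that every subset of `A \ B` of measure `≤ t - μ B` is null; the added pieces have summable
measures, so they shrink to zero. If `μ B < t`, σ-finiteness gives a subset of `A \ B` of finite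
positive measure, and repeated halving, possible since there are no atoms, shrinks it below
`t - μ B`, a contradiction.
-/

open MeasureTheory Set Filter
open scoped ENNReal Topology

/-- A measure is atom-free if no measurable set `A` with `μ A > 0` is an atom, i.e.
every such `A` has a measurable subset `B` with `μ B > 0` and `μ (A \ B) > 0`. -/
def AtomFree {Ω : Type*} [MeasurableSpace Ω] (μ : Measure Ω) : Prop :=
  ∀ A : Set Ω, MeasurableSet A → 0 < μ A →
    ∃ B : Set Ω, MeasurableSet B ∧ B ⊆ A ∧ 0 < μ B ∧ 0 < μ (A \ B)

section

variable {Ω : Type*} [MeasurableSpace Ω] (μ : Measure Ω)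

namespace MeasureTheory.Measure

theorem exists_subset_measure_le_almost_maximal (D : Set Ω)
    {s : ℝ≥0∞} (hs : s ≠ ∞) :
    ∃ C, MeasurableSet C ∧ C ⊆ D ∧ μ C ≤ s ∧
      ∀ C', MeasurableSet C' → C' ⊆ D → μ C' ≤ s → μ C' ≤ 2 * μ C := by
  set δ := ⨆ (C : Set Ω) (_ : MeasurableSet C ∧ C ⊆ D ∧ μ C ≤ s), μ C
  have le_δ : ∀ C', MeasurableSet C' → C' ⊆ D → μ C' ≤ s → μ C' ≤ δ :=
    fun C' h₁ h₂ h₃ ↦ le_iSup₂_of_le C' ⟨h₁, h₂, h₃⟩ le_rfl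
  rcases eq_or_ne δ 0 with hδ | hδ
  · refine ⟨∅, .empty, empty_subset _, by simp, fun C' h₁ h₂ h₃ ↦ ?_⟩
    simpa [hδ] using le_δ C' h₁ h₂ h₃
  have hδs : δ ≤ s := iSup₂_le fun _ h ↦ h.2.2
  obtain ⟨C, hC⟩ := lt_iSup_iff.mp (ENNReal.half_lt_self hδ (ne_top_of_le_ne_top hs hδs))
  obtain ⟨⟨hCm, hCD, hCs⟩, hδC⟩ := lt_iSup_iff.mp hC
  refine ⟨C, hCm, hCD, hCs, fun C' h₁ h₂ h₃ ↦ ?_⟩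
  calc μ C' ≤ δ := le_δ C' h₁ h₂ h₃
    _ = 2 * (δ / 2) := (ENNReal.mul_div_cancel two_ne_zero ENNReal.ofNat_ne_top).symm
    _ ≤ 2 * μ C := by gcongr

theorem exists_subset_measure_le_maximal (A : Set Ω) {t : ℝ≥0∞} (ht : t ≠ ∞) :
    ∃ B, MeasurableSet B ∧ B ⊆ A ∧ μ B ≤ t ∧
      ∀ C, MeasurableSet C → C ⊆ A \ B → μ C ≤ t - μ B → μ C = 0 := by
  choose f hfm hfA hft hfmax using fun S : Set Ω ↦
    μ.exists_subset_measure_le_almost_maximal (A \ S) (ENNReal.sub_ne_top (b := μ S) ht)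
  let B : ℕ → Set Ω := fun n ↦ Nat.rec ∅ (fun _ S ↦ S ∪ f S) n
  have B_mono : Monotone B := monotone_nat_of_le_succ fun n ↦ subset_union_left
  have B_meas (n : ℕ) : MeasurableSet (B n) := by
    induction n with
    | zero => exact .empty
    | succ n ih => exact ih.union (hfm _)
  have B_sub (n : ℕ) : B n ⊆ A := by
    induction n with
    | zero => exact empty_subset _
    | succ n ih => exact union_subset ih ((hfA _).trans sdiff_subset)
  have μB_succ (n : ℕ) : μ (B (n + 1)) = μ (B n) + μ (f (B n)) :=
    measure_union (disjoint_sdiff_right.mono_right (hfA _)) (hfm _)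
  have μB_le (n : ℕ) : μ (B n) ≤ t := by
    induction n with
    | zero => simp [B]
    | succ n ih =>
      calc μ (B (n + 1)) = μ (B n) + μ (f (B n)) := μB_succ n
        _ ≤ μ (B n) + (t - μ (B n)) := by gcongr; exact hft _
        _ = t := add_tsub_cancel_of_le ih
  have μB_eq_sum (n : ℕ) : μ (B n) = ∑ k ∈ Finset.range n, μ (f (B k)) := by
    induction n with
    | zero => simp [B]
    | succ n ih => rw [μB_succ, ih, Finset.sum_range_succ]
  have pieces_tendsto : Tendsto (fun n ↦ 2 * μ (f (B n))) atTop (𝓝 0) := by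
    have hsum : ∑' n, μ (f (B n)) ≠ ∞ :=
      ne_top_of_le_ne_top ht (ENNReal.tsum_le_of_sum_range_le fun n ↦ μB_eq_sum n ▸ μB_le n)
    simpa using ENNReal.Tendsto.const_mul (ENNReal.tendsto_atTop_zero_of_tsum_ne_top hsum)
      (Or.inr ENNReal.ofNat_ne_top)
  have μ_iUnion_le : μ (⋃ n, B n) ≤ t := by
    rw [B_mono.measure_iUnion]; exact iSup_le μB_le
  refine ⟨⋃ n, B n, .iUnion B_meas, iUnion_subset B_sub, μ_iUnion_le, fun C hCm hCA hCt ↦ ?_⟩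
  refine le_antisymm (ge_of_tendsto' pieces_tendsto fun n ↦ hfmax _ C hCm ?_ ?_) bot_le
  · exact hCA.trans (sdiff_subset_sdiff_right (subset_iUnion B n))
  · exact hCt.trans (tsub_le_tsub_left (measure_mono (subset_iUnion B n)) t)

end MeasureTheory.Measure

namespace AtomFree

variable {μ}

theorem exists_subset_measure_le_half (hμ : AtomFree μ) {A : Set Ω} (hA : MeasurableSet A)
    (h0 : 0 < μ A) : ∃ B, MeasurableSet B ∧ B ⊆ A ∧ 0 < μ B ∧ μ B ≤ μ A / 2 := by
  obtain ⟨B, hBm, hBA, hB0, hAB0⟩ := hμ A hA h0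
  by_cases hB : μ B ≤ μ A / 2
  · exact ⟨B, hBm, hBA, hB0, hB⟩
  refine ⟨A \ B, hA.diff hBm, sdiff_subset, hAB0, not_lt.mp fun hAB ↦ ?_⟩
  have : μ A < μ A :=
    calc μ A = μ A / 2 + μ A / 2 := (ENNReal.add_halves _).symm
      _ < μ B + μ (A \ B) := ENNReal.add_lt_add (not_le.mp hB) hAB
      _ = μ A := by rw [← measure_inter_add_sdiff A hBm, inter_eq_right.mpr hBA]
  exact this.false

theorem exists_subset_measure_le_inv_two_pow (hμ : AtomFree μ) {A : Set Ω}
    (hA : MeasurableSet A) (h0 : 0 < μ A) (n : ℕ) :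
    ∃ B, MeasurableSet B ∧ B ⊆ A ∧ 0 < μ B ∧ μ B ≤ μ A * 2⁻¹ ^ n := by
  induction n with
  | zero => exact ⟨A, hA, subset_rfl, h0, by simp⟩
  | succ n ih =>
    obtain ⟨B, hBm, hBA, hB0, hBle⟩ := ih
    obtain ⟨C, hCm, hCB, hC0, hCle⟩ := hμ.exists_subset_measure_le_half hBm hB0
    refine ⟨C, hCm, hCB.trans hBA, hC0, ?_⟩
    calc μ C ≤ μ B * 2⁻¹ := div_eq_mul_inv (μ B) 2 ▸ hCle
      _ ≤ μ A * 2⁻¹ ^ n * 2⁻¹ := by gcongr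
      _ = μ A * 2⁻¹ ^ (n + 1) := by rw [pow_succ, mul_assoc]

theorem exists_subset_measure_pos_lt [SigmaFinite μ] (hμ : AtomFree μ) {A : Set Ω}
    (hA : MeasurableSet A) (h0 : 0 < μ A) {ε : ℝ≥0∞} (hε : ε ≠ 0) :
    ∃ B, MeasurableSet B ∧ B ⊆ A ∧ 0 < μ B ∧ μ B < ε := by
  obtain ⟨A', hA'm, hA'A, hA'0, hA'fin⟩ := Measure.exists_subset_measure_lt_top hA h0
  obtain ⟨n, hn⟩ := ENNReal.exists_inv_two_pow_lt (ENNReal.div_pos hε hA'fin.ne).ne'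
  obtain ⟨B, hBm, hBA', hB0, hBle⟩ := hμ.exists_subset_measure_le_inv_two_pow hA'm hA'0 n
  refine ⟨B, hBm, hBA'.trans hA'A, hB0, hBle.trans_lt ?_⟩
  rw [mul_comm]
  exact ENNReal.mul_lt_of_lt_div hn

end AtomFree

end

/-- in an atom-free σ-finite measure space, for every measurable `A`
and every `t ∈ [0, μ A]` there is a measurable `B ⊆ A` with `μ B = t`. -/
theorem stmt1 {Ω : Type*} [MeasurableSpace Ω] (μ : Measure Ω) [SigmaFinite μ]
    (hμ : AtomFree μ) (A : Set Ω) (hA : MeasurableSet A) (t : ℝ≥0∞) (ht : t ≤ μ A) :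
    ∃ B : Set Ω, MeasurableSet B ∧ B ⊆ A ∧ μ B = t := by
  rcases eq_or_ne t ∞ with rfl | ht_top
  · exact ⟨A, hA, subset_rfl, top_le_iff.mp ht⟩
  obtain ⟨B, hBm, hBA, hBt, hBmax⟩ := μ.exists_subset_measure_le_maximal A ht_top
  refine ⟨B, hBm, hBA, hBt.eq_of_not_lt fun hlt ↦ ?_⟩
  have gap_pos : 0 < μ (A \ B) := by
    rw [measure_sdiff hBA hBm.nullMeasurableSet (ne_top_of_le_ne_top ht_top hBt)]
    exact tsub_pos_of_lt (hlt.trans_le ht)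
  obtain ⟨C, hCm, hCA, hC0, hCt⟩ :=
    hμ.exists_subset_measure_pos_lt (hA.diff hBm) gap_pos (tsub_pos_of_lt hlt).ne'
  exact hC0.ne' (hBmax C hCm hCA hCt.le)
end

section
/- Let u ∈ L^1(Ω), K ∈ (0, μ(Ω)), t ≥ 0, and A ∈ 𝒜 with {|u| > t} ⊆ A ⊆ {|u| ≥ t} and μ(A) = K. Then |u|_K = ∫_A |u| dμ, i.e., A attains the supremum in the definition of the largest-K-norm. -/
open MeasureTheory Set
open scoped ENNReal

/-! Bathtub principle: if `μ B ≤ μ A < ∞`, then `μ (B \ A) ≤ μ (A \ B)`. Replacing the part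
`B \ A`, where `|u| ≤ t`, by the at least as large part `A \ B`, where `|u| ≥ t ≥ 0`, can only
increase the integral, so `∫_B |u| ≤ ∫_A |u|` and `A` is a maximiser. -/

/-- The largest-K-norm: `|u|_K = sup { ∫_B |u| dμ : B measurable, μ(B) ≤ K }`. -/
noncomputable def largestK {Ω : Type*} [MeasurableSpace Ω] (μ : Measure Ω) (K : ℝ≥0∞)
    (u : Ω → ℝ) : ℝ :=
  sSup {r : ℝ | ∃ B : Set Ω, MeasurableSet B ∧ μ B ≤ K ∧ r = ∫ x in B, |u x| ∂μ}

section Bathtub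

variable {Ω : Type*} [MeasurableSpace Ω] {μ : Measure Ω} {s t : Set Ω}

theorem measure_sdiff_le_measure_sdiff_of_le (hs : MeasurableSet s) (ht : MeasurableSet t)
    (hμt : μ t ≠ ∞) (hst : μ s ≤ μ t) : μ (s \ t) ≤ μ (t \ s) := by
  have hfin : μ (t ∩ s) ≠ ∞ := measure_ne_top_of_subset inter_subset_left hμt
  rw [← ENNReal.add_le_add_iff_left hfin, measure_inter_add_sdiff t hs, inter_comm,
    measure_inter_add_sdiff s ht]
  exact hst

theorem setIntegral_le_setIntegral_of_superlevel {f : Ω → ℝ} {c : ℝ} (hf : Integrable f μ)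
    (hc : 0 ≤ c) (hs : MeasurableSet s) (ht : MeasurableSet t) (hμt : μ t ≠ ∞)
    (hst : μ s ≤ μ t) (h_gt : {x | c < f x} ⊆ t) (h_ge : t ⊆ {x | c ≤ f x}) :
    ∫ x in s, f x ∂μ ≤ ∫ x in t, f x ∂μ := by
  have hμts : μ (t \ s) ≠ ∞ := measure_ne_top_of_subset sdiff_subset hμt
  have h_out : ∫ x in s \ t, f x ∂μ ≤ c * μ.real (s \ t) := by
    have hμst : μ (s \ t) ≠ ∞ :=
      measure_ne_top_of_subset sdiff_subset (ne_top_of_le_ne_top hμt hst)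
    calc ∫ x in s \ t, f x ∂μ ≤ ∫ _ in s \ t, c ∂μ :=
          setIntegral_mono_on hf.integrableOn (integrableOn_const hμst) (hs.diff ht)
            fun x hx => not_lt.1 fun h => hx.2 (h_gt h)
      _ = c * μ.real (s \ t) := by rw [setIntegral_const, smul_eq_mul, mul_comm]
  have h_in : c * μ.real (t \ s) ≤ ∫ x in t \ s, f x ∂μ :=
    setIntegral_ge_of_const_le_real (ht.diff hs) hμts (fun x hx => h_ge hx.1) hf.integrableOn
  have h_measure : μ.real (s \ t) ≤ μ.real (t \ s) :=
    ENNReal.toReal_mono hμts (measure_sdiff_le_measure_sdiff_of_le hs ht hμt hst)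
  have h_swap : ∫ x in s \ t, f x ∂μ ≤ ∫ x in t \ s, f x ∂μ :=
    calc ∫ x in s \ t, f x ∂μ ≤ c * μ.real (s \ t) := h_out
      _ ≤ c * μ.real (t \ s) := mul_le_mul_of_nonneg_left h_measure hc
      _ ≤ ∫ x in t \ s, f x ∂μ := h_in
  rw [← integral_inter_add_sdiff ht (hf.integrableOn (s := s)),
    ← integral_inter_add_sdiff hs (hf.integrableOn (s := t)), inter_comm t s]
  exact add_le_add le_rfl h_swap

theorem isGreatest_setIntegral_of_superlevel {f : Ω → ℝ} {c : ℝ} (hf : Integrable f μ)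
    (hc : 0 ≤ c) (ht : MeasurableSet t) (hμt : μ t ≠ ∞) (h_gt : {x | c < f x} ⊆ t)
    (h_ge : t ⊆ {x | c ≤ f x}) :
    IsGreatest {r : ℝ | ∃ B : Set Ω, MeasurableSet B ∧ μ B ≤ μ t ∧ r = ∫ x in B, f x ∂μ}
      (∫ x in t, f x ∂μ) := by
  refine ⟨⟨t, ht, le_rfl, rfl⟩, ?_⟩
  rintro r ⟨B, hB, hμB, rfl⟩
  exact setIntegral_le_setIntegral_of_superlevel hf hc hB ht hμt hμB h_gt h_ge

end Bathtub

theorem stmt3_general {Ω : Type*} [MeasurableSpace Ω] (μ : Measure Ω)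
    (u : Ω → ℝ) (hu : Integrable u μ) (K : ℝ≥0∞) (hK : K < μ Set.univ)
    (t : ℝ) (ht : 0 ≤ t) (A : Set Ω) (hA : MeasurableSet A)
    (h1 : {x | t < |u x|} ⊆ A) (h2 : A ⊆ {x | t ≤ |u x|}) (hμA : μ A = K) :
    largestK μ K u = ∫ x in A, |u x| ∂μ := by
  subst hμA
  exact (isGreatest_setIntegral_of_superlevel hu.abs ht hA hK.ne_top h1 h2).csSup_eq

/-- if `{|u| > t} ⊆ A ⊆ {|u| ≥ t}` and `μ A = K`, then `A` attains the
supremum in the definition of the largest-K-norm: `|u|_K = ∫_A |u| dμ`. -/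
theorem stmt3 {Ω : Type*} [MeasurableSpace Ω] (μ : Measure Ω) [SigmaFinite μ]
    (u : Ω → ℝ) (hu : Integrable u μ) (K : ℝ≥0∞) (hK0 : 0 < K) (hK : K < μ Set.univ)
    (t : ℝ) (ht : 0 ≤ t) (A : Set Ω) (hA : MeasurableSet A)
    (h1 : {x | t < |u x|} ⊆ A) (h2 : A ⊆ {x | t ≤ |u x|}) (hμA : μ A = K) :
    largestK μ K u = ∫ x in A, |u x| ∂μ :=
  stmt3_general μ u hu K hK t ht A hA h1 h2 hμA
end

section
/- Let (Ω, 𝒜, μ) be a σ-finite measure space, u ∈ L^1(Ω), and K ∈ (0, μ(Ω)). Then there exists A ∈ 𝒜 with μ(A) ≤ K such that |u|_K = ∫_A |u| dμ, i.e., the supremum in the definition of the largest-K-norm is attained (even if μ has atoms). -/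
/-!
With `ν = |u| μ`, a finite measure, the problem is to maximise `ν B` subject to `μ B ≤ K`.
Split `Ω` into countably many `μ`-atoms `Aᵢ` and an atomless remainder `N`. On `N` the bathtub
principle, made possible by Sierpiński's intermediate value theorem, gives for every budget `x` an
optimal subset; its value `φ x` is right-continuous in `x` because `ν ≪ μ` uniformly.
Since a measurable set either almost contains or almost misses each atom, the problem becomes a
knapsack problem: choose `J ⊆ ℕ` and `y` with `∑_{i ∈ J} μ Aᵢ + y ≤ K` maximising
`∑_{i ∈ J} ν Aᵢ + φ y`. An ultrafilter limit of a maximising sequence is optimal: the constraint is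
closed under such limits, the atom values are summable, and `φ` is monotone and right-continuous.
-/

open MeasureTheory Set
open scoped ENNReal

open Filter Topology
open scoped Function

theorem ENNReal.tendsto_tsum_of_dominated_convergence {α β : Type*} {l : Filter α}
    {f : α → β → ℝ≥0∞} {g bound : β → ℝ≥0∞} (h_sum : ∑' k, bound k ≠ ∞)
    (h_lim : ∀ k, Tendsto (f · k) l (𝓝 (g k))) (h_bound : ∀ n k, f n k ≤ bound k) :
    Tendsto (fun n => ∑' k, f n k) l (𝓝 (∑' k, g k)) := by
  rcases l.eq_or_neBot with rfl | _
  · exact tendsto_bot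
  have hg : ∀ k, g k ≤ bound k := fun k => le_of_tendsto' (h_lim k) fun n => h_bound n k
  have hbound : ∀ k, bound k ≠ ∞ := ENNReal.ne_top_of_tsum_ne_top h_sum
  have hf : ∀ n k, f n k ≠ ∞ := fun n k => ne_top_of_le_ne_top (hbound k) (h_bound n k)
  have hg' : ∀ k, g k ≠ ∞ := fun k => ne_top_of_le_ne_top (hbound k) (hg k)
  rw [← ENNReal.tendsto_toReal_iff
    (fun n => ne_top_of_le_ne_top h_sum (ENNReal.tsum_le_tsum (h_bound n)))
    (ne_top_of_le_ne_top h_sum (ENNReal.tsum_le_tsum hg))]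
  simp only [ENNReal.tsum_toReal_eq (hf _), ENNReal.tsum_toReal_eq hg']
  refine _root_.tendsto_tsum_of_dominated_convergence (ENNReal.summable_toReal h_sum)
    (fun k => (ENNReal.tendsto_toReal (hg' k)).comp (h_lim k)) (Eventually.of_forall fun n k => ?_)
  rw [Real.norm_of_nonneg ENNReal.toReal_nonneg]
  exact ENNReal.toReal_mono (hbound k) (h_bound n k)

theorem Ultrafilter.tendsto_indicator {α β M : Type*} [Zero M] [TopologicalSpace M]
    (U : Ultrafilter α) (J : α → Set β) (f : β → M) (i : β) :
    Tendsto (fun k => (J k).indicator f i) U (𝓝 ({i | ∀ᶠ k in U, i ∈ J k}.indicator f i)) := by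
  by_cases hi : i ∈ {i | ∀ᶠ k in U, i ∈ J k}
  · rw [indicator_of_mem hi]
    exact tendsto_const_nhds.congr' (hi.mono fun k hk => (indicator_of_mem hk f).symm)
  · rw [indicator_of_notMem hi]
    exact tendsto_const_nhds.congr'
      ((Ultrafilter.eventually_not.2 hi : ∀ᶠ k in U, i ∉ J k).mono fun k hk =>
        (indicator_of_notMem hk f).symm)

/-- A knapsack problem with countably many indivisible items of sizes `a i` and values `b i`, plus a
divisible good whose value `φ y` for size `y` is monotone and right-continuous, has an optimal
solution. -/
theorem exists_isMax_tsum_indicator_add {a b : ℕ → ℝ≥0∞} (hb : ∑' i, b i ≠ ∞)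
    {φ : ℝ≥0∞ → ℝ≥0∞} (hφ : Monotone φ)
    (hφ_right : ∀ x ≠ ∞, ∀ ε ≠ 0, ∃ δ ≠ 0, φ (x + δ) ≤ φ x + ε) {K : ℝ≥0∞} (hK : K ≠ ∞) :
    ∃ (I : Set ℕ) (x : ℝ≥0∞), ∑' i, I.indicator a i + x ≤ K ∧
      ∀ (J : Set ℕ) (y : ℝ≥0∞), ∑' i, J.indicator a i + y ≤ K →
        ∑' i, J.indicator b i + φ y ≤ ∑' i, I.indicator b i + φ x := by
  set V := {v | ∃ (J : Set ℕ) (y : ℝ≥0∞), ∑' i, J.indicator a i + y ≤ K ∧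
    v = ∑' i, J.indicator b i + φ y}
  obtain ⟨v, -, hv_lim, hv_mem⟩ :=
    exists_seq_tendsto_sSup (S := V) ⟨_, ∅, 0, by simp, rfl⟩ (OrderTop.bddAbove V)
  choose J y hJy hv using hv_mem
  let U : Ultrafilter ℕ := Ultrafilter.of atTop
  set I := {i | ∀ᶠ k in U, i ∈ J k}
  set x := (U.map y).lim
  have hy : Tendsto y U (𝓝 x) := by
    have := Ultrafilter.le_nhds_lim (U.map y)
    rwa [Ultrafilter.coe_map] at this
  have hIx : ∑' i, I.indicator a i + x ≤ K := by
    rw [ENNReal.tsum_eq_iSup_sum, ENNReal.iSup_add]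
    refine iSup_le fun s => le_of_tendsto'
      ((tendsto_finsetSum s fun i _ => U.tendsto_indicator J a i).add hy) fun k => ?_
    calc ∑ i ∈ s, (J k).indicator a i + y k ≤ ∑' i, (J k).indicator a i + y k := by
          gcongr; exact ENNReal.sum_le_tsum s
      _ ≤ K := hJy k
  have hx : x ≠ ∞ := ne_top_of_le_ne_top hK (le_add_self.trans hIx)
  have hb_lim : Tendsto (fun k => ∑' i, (J k).indicator b i) U (𝓝 (∑' i, I.indicator b i)) :=
    ENNReal.tendsto_tsum_of_dominated_convergence hb (U.tendsto_indicator J b)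
      fun k i => indicator_le_self _ _ i
  refine ⟨I, x, hIx, fun J' y' hJ'y' => (le_sSup (show _ ∈ V from ⟨J', y', hJ'y', rfl⟩)).trans ?_⟩
  refine ENNReal.le_of_forall_pos_le_add fun ε hε _ => ?_
  obtain ⟨δ, hδ, hφδ⟩ := hφ_right x hx ε (by exact_mod_cast hε.ne')
  have hVδ : sSup V ≤ ∑' i, I.indicator b i + φ (x + δ) := by
    refine le_of_tendsto_of_tendsto (hv_lim.mono_left (Ultrafilter.of_le _))
      (hb_lim.add_const _) ?_
    filter_upwards [(tendsto_order.1 hy).2 _ (ENNReal.lt_add_right hx hδ)] with k hk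
    rw [hv k]
    gcongr
    exact hφ hk.le
  calc sSup V ≤ ∑' i, I.indicator b i + φ (x + δ) := hVδ
    _ ≤ ∑' i, I.indicator b i + (φ x + ε) := by gcongr
    _ = ∑' i, I.indicator b i + φ x + ε := (add_assoc _ _ _).symm

theorem exists_mem_forall_le_two_mul {α : Type*} {s : Set α} {f : α → ℝ≥0∞} (hs : s.Nonempty)
    (hf : ⨆ a ∈ s, f a ≠ ∞) : ∃ a ∈ s, ∀ b ∈ s, f b ≤ 2 * f a := by
  rcases eq_or_ne (⨆ a ∈ s, f a) 0 with h | h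
  · obtain ⟨a, ha⟩ := hs
    refine ⟨a, ha, fun b hb => ?_⟩
    exact (le_biSup f hb).trans (h.trans_le zero_le)
  · obtain ⟨a, ha, hlt⟩ := lt_biSup_iff.1 (ENNReal.half_lt_self h hf)
    refine ⟨a, ha, fun b hb => ?_⟩
    calc f b ≤ ⨆ a ∈ s, f a := le_biSup f hb
      _ = 2 * ((⨆ a ∈ s, f a) / 2) :=
        (ENNReal.mul_div_cancel two_ne_zero ENNReal.ofNat_ne_top).symm
      _ ≤ 2 * f a := by gcongr

theorem exists_greedy_seq {Ω : Type*} (f : Set Ω → ℝ≥0∞) (F₀ : Set Ω) (𝒜 : Set Ω → Set (Set Ω))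
    (h𝒜 : ∀ F, ⨆ B ∈ 𝒜 F, f B ≠ ∞) :
    ∃ F B : ℕ → Set Ω, F 0 = F₀ ∧ ∀ n, F (n + 1) = F n ∪ B n ∧ (B n = ∅ ∨ B n ∈ 𝒜 (F n)) ∧
      ∀ B' ∈ 𝒜 (F n), f B' ≤ 2 * f (B n) := by
  have hpick : ∀ F, ∃ B, (B = ∅ ∨ B ∈ 𝒜 F) ∧ ∀ B' ∈ 𝒜 F, f B' ≤ 2 * f B := by
    intro F
    rcases (𝒜 F).eq_empty_or_nonempty with h | h
    · exact ⟨∅, Or.inl rfl, by simp [h]⟩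
    · obtain ⟨B, hB, hmax⟩ := exists_mem_forall_le_two_mul h (h𝒜 F)
      exact ⟨B, Or.inr hB, hmax⟩
  choose pick hpick using hpick
  let F : ℕ → Set Ω := fun n => (fun F => F ∪ pick F)^[n] F₀
  exact ⟨F, fun n => pick (F n), rfl, fun n => ⟨Function.iterate_succ_apply' _ n F₀, hpick (F n)⟩⟩

namespace MeasureTheory

variable {Ω : Type*} [MeasurableSpace Ω] {μ : Measure Ω}

theorem eq_zero_of_forall_le_two_mul_measure {F B : ℕ → Set Ω}
    (hF : ∀ n, F (n + 1) = F n ∪ B n) (hB : ∀ n, MeasurableSet (B n))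
    (hdisj : ∀ n, Disjoint (F n) (B n)) {M : ℝ≥0∞} (hM : M ≠ ∞) (hFM : ∀ n, μ (F n) ≤ M)
    {c : ℝ≥0∞} (hc : ∀ n, c ≤ 2 * μ (B n)) : c = 0 := by
  have hsum : ∀ n, ∑ k ∈ Finset.range n, μ (B k) ≤ μ (F n) := by
    intro n
    induction n with
    | zero => simp
    | succ n ih =>
      rw [Finset.sum_range_succ, hF, measure_union (hdisj n) (hB n)]
      gcongr
  have hB0 := ENNReal.tendsto_atTop_zero_of_tsum_ne_top <| ne_top_of_le_ne_top hM <|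
    ENNReal.tsum_le_of_sum_range_le fun n => (hsum n).trans (hFM n)
  simpa using ge_of_tendsto' (ENNReal.Tendsto.const_mul hB0 (Or.inr ENNReal.ofNat_ne_top)) hc

namespace Measure

def IsAtom (μ : Measure Ω) (A : Set Ω) : Prop :=
  MeasurableSet A ∧ μ A ≠ 0 ∧ ∀ B ⊆ A, MeasurableSet B → μ B = 0 ∨ μ (A \ B) = 0

def AtomlessOn (μ : Measure Ω) (S : Set Ω) : Prop :=
  ∀ A ⊆ S, ¬ μ.IsAtom A

theorem AtomlessOn.mono {S T : Set Ω} (hS : μ.AtomlessOn S) (hTS : T ⊆ S) : μ.AtomlessOn T :=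
  fun A hA => hS A (hA.trans hTS)

theorem IsAtom.measure_inter_eq_zero_or_measure_sdiff_eq_zero {A B : Set Ω} (hA : μ.IsAtom A)
    (hB : MeasurableSet B) : μ (B ∩ A) = 0 ∨ μ (A \ B) = 0 := by
  simpa only [sdiff_inter_self_eq_sdiff] using hA.2.2 (B ∩ A) inter_subset_right (hB.inter hA.1)

theorem AtomlessOn.exists_subset_two_mul_le {S C : Set Ω} (hS : μ.AtomlessOn S) (hCS : C ⊆ S)
    (hC : MeasurableSet C) (hC0 : μ C ≠ 0) :
    ∃ T ⊆ C, MeasurableSet T ∧ μ T ≠ 0 ∧ 2 * μ T ≤ μ C := by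
  obtain ⟨B, hBC, hB, hB0, hCB0⟩ : ∃ B ⊆ C, MeasurableSet B ∧ μ B ≠ 0 ∧ μ (C \ B) ≠ 0 := by
    by_contra! h
    exact hS C hCS ⟨hC, hC0, fun B hBC hB => or_iff_not_imp_left.2 (h B hBC hB)⟩
  have hsplit : μ B + μ (C \ B) = μ C := by
    rw [← measure_inter_add_sdiff C hB, inter_eq_self_of_subset_right hBC]
  rcases le_total (μ B) (μ (C \ B)) with h | h
  · exact ⟨B, hBC, hB, hB0, by rw [two_mul, ← hsplit]; gcongr⟩
  · exact ⟨C \ B, sdiff_subset, hC.diff hB, hCB0, by rw [two_mul, ← hsplit]; gcongr⟩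

theorem AtomlessOn.exists_subset_measure_lt [SigmaFinite μ] {S : Set Ω} (hS : μ.AtomlessOn S)
    (hSm : MeasurableSet S) (hS0 : μ S ≠ 0) {ε : ℝ≥0∞} (hε : ε ≠ 0) :
    ∃ T ⊆ S, MeasurableSet T ∧ μ T ≠ 0 ∧ μ T < ε := by
  obtain ⟨T₀, hT₀, hT₀S, hT₀0, hT₀fin⟩ := exists_subset_measure_lt_top hSm (pos_iff_ne_zero.2 hS0)
  have halving : ∀ n : ℕ, ∃ T ⊆ T₀, MeasurableSet T ∧ μ T ≠ 0 ∧ μ T ≤ 2⁻¹ ^ n * μ T₀ := by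
    intro n
    induction n with
    | zero => exact ⟨T₀, subset_rfl, hT₀, hT₀0.ne', by simp⟩
    | succ n ih =>
      obtain ⟨T, hTT₀, hT, hT0, hTle⟩ := ih
      obtain ⟨T', hT'T, hT', hT'0, hT'le⟩ := hS.exists_subset_two_mul_le (hTT₀.trans hT₀S) hT hT0
      refine ⟨T', hT'T.trans hTT₀, hT', hT'0, ?_⟩
      calc μ T' ≤ 2⁻¹ * μ T := by
            rw [← ENNReal.div_eq_inv_mul, ENNReal.le_div_iff_mul_le (by norm_num) (by norm_num),
              mul_comm]
            exact hT'le
        _ ≤ 2⁻¹ * (2⁻¹ ^ n * μ T₀) := by gcongr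
        _ = 2⁻¹ ^ (n + 1) * μ T₀ := by ring
  obtain ⟨n, hn⟩ := ENNReal.exists_inv_two_pow_lt (ENNReal.div_pos hε hT₀fin.ne).ne'
  obtain ⟨T, hTT₀, hT, hT0, hTle⟩ := halving n
  exact ⟨T, hTT₀.trans hT₀S, hT, hT0, hTle.trans_lt (ENNReal.mul_lt_of_lt_div hn)⟩

/-- Sierpiński's theorem, in the form of an intermediate set between `E` and `D`. -/
theorem AtomlessOn.exists_measure_eq [SigmaFinite μ] {E D : Set Ω} (hED : μ.AtomlessOn (D \ E))
    (hE : MeasurableSet E) (hD : MeasurableSet D) (hsub : E ⊆ D) {r : ℝ≥0∞} (hEr : μ E ≤ r)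
    (hrD : r ≤ μ D) (hr : r ≠ ∞) : ∃ C, MeasurableSet C ∧ E ⊆ C ∧ C ⊆ D ∧ μ C = r := by
  let 𝒜 : Set Ω → Set (Set Ω) := fun F => {B | MeasurableSet B ∧ B ⊆ D \ F ∧ μ F + μ B ≤ r}
  obtain ⟨F, B, hF0, hF⟩ := exists_greedy_seq μ E 𝒜 fun F =>
    ne_top_of_le_ne_top hr (iSup₂_le fun B hB => le_add_self.trans hB.2.2)
  choose hFsucc hB hmax using hF
  have hFinv : ∀ n, MeasurableSet (F n) ∧ E ⊆ F n ∧ F n ⊆ D ∧ μ (F n) ≤ r := by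
    intro n
    induction n with
    | zero => rw [hF0]; exact ⟨hE, subset_rfl, hsub, hEr⟩
    | succ n ih =>
      obtain ⟨hBm, hBD, hBr⟩ : B n ∈ 𝒜 (F n) := by
        rcases hB n with h | h
        · simpa [h, 𝒜] using ih.2.2.2
        · exact h
      rw [hFsucc]
      exact ⟨ih.1.union hBm, ih.2.1.trans subset_union_left,
        union_subset ih.2.2.1 (hBD.trans sdiff_subset), (measure_union_le _ _).trans hBr⟩
  have hBm : ∀ n, MeasurableSet (B n) ∧ Disjoint (F n) (B n) := fun n => by
    rcases hB n with h | h
    · simp [h]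
    · exact ⟨h.1, disjoint_sdiff_right.mono_right h.2.1⟩
  have hFmono : Monotone F := monotone_nat_of_le_succ fun n => (hFsucc n).symm ▸ subset_union_left
  set T := ⋃ n, F n
  have hTr : μ T ≤ r := by
    rw [hFmono.measure_iUnion]
    exact iSup_le fun n => (hFinv n).2.2.2
  have hET : E ⊆ T := (hFinv 0).2.1.trans (subset_iUnion F 0)
  refine ⟨T, MeasurableSet.iUnion fun n => (hFinv n).1, hET,
    iUnion_subset fun n => (hFinv n).2.2.1, hTr.antisymm (not_lt.1 fun hlt => ?_)⟩
  have hDT : μ (D \ T) ≠ 0 := fun h0 =>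
    (hlt.trans_le hrD).not_ge ((measure_le_inter_add_sdiff μ D T).trans (by
      rw [h0, add_zero]; exact measure_mono inter_subset_right))
  obtain ⟨T', hT'D, hT', hT'0, hT'lt⟩ :=
    (hED.mono (sdiff_subset_sdiff_right hET)).exists_subset_measure_lt
      (hD.diff (MeasurableSet.iUnion fun n => (hFinv n).1)) hDT (tsub_pos_of_lt hlt).ne'
  refine hT'0 (eq_zero_of_forall_le_two_mul_measure hFsucc (fun n => (hBm n).1)
    (fun n => (hBm n).2) hr (fun n => (hFinv n).2.2.2) fun n => hmax n T' ⟨hT', ?_, ?_⟩)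
  · exact hT'D.trans (sdiff_subset_sdiff_right (subset_iUnion F n))
  · calc μ (F n) + μ T' ≤ μ T + μ T' := by gcongr; exact subset_iUnion F n
      _ ≤ r := (lt_tsub_iff_left.1 hT'lt).le

theorem exists_atoms_atomlessOn_compl (μ : Measure Ω) [SFinite μ] :
    ∃ A : ℕ → Set Ω, (∀ i, A i = ∅ ∨ μ.IsAtom (A i)) ∧ Pairwise (Disjoint on A) ∧
      μ.AtomlessOn (⋃ i, A i)ᶜ := by
  obtain ⟨μ', _, hμμ', -⟩ := exists_isFiniteMeasure_absolutelyContinuous μ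
  let 𝒜 : Set Ω → Set (Set Ω) := fun F => {B | μ.IsAtom B ∧ Disjoint F B}
  obtain ⟨F, B, hF0, hF⟩ := exists_greedy_seq μ' ∅ 𝒜 fun F =>
    ne_top_of_le_ne_top (measure_ne_top μ' univ) (iSup₂_le fun B _ => measure_mono (subset_univ B))
  choose hFsucc hB hmax using hF
  have hBm : ∀ n, MeasurableSet (B n) ∧ Disjoint (F n) (B n) := fun n => by
    rcases hB n with h | h
    · simp [h]
    · exact ⟨h.1.1, h.2⟩
  have hFmono : Monotone F := monotone_nat_of_le_succ fun n => (hFsucc n).symm ▸ subset_union_left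
  have hFB : ∀ n, F n ⊆ ⋃ k, B k := by
    intro n
    induction n with
    | zero => simp [hF0]
    | succ n ih => rw [hFsucc]; exact union_subset ih (subset_iUnion B n)
  refine ⟨B, fun n => (hB n).imp id (·.1), (pairwise_disjoint_on B).2 fun m n hmn => ?_, ?_⟩
  · exact (hBm n).2.mono_left (((hFsucc m).symm ▸ subset_union_right).trans (hFmono hmn))
  · intro A hA hatom
    refine hatom.2.1 (hμμ' (eq_zero_of_forall_le_two_mul_measure hFsucc (fun n => (hBm n).1)
      (fun n => (hBm n).2) (measure_ne_top μ' univ) (fun n => measure_mono (subset_univ _))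
      fun n => hmax n A ⟨hatom, ?_⟩))
    exact disjoint_compl_right.mono (hFB n) hA

end Measure

noncomputable def bathtubLevel (μ : Measure Ω) (g : Ω → ℝ≥0∞) (x : ℝ≥0∞) : ℝ≥0∞ :=
  sInf {t | μ {ω | t < g ω} ≤ x}

theorem measure_bathtubLevel_lt_le (g : Ω → ℝ≥0∞) (x : ℝ≥0∞) :
    μ {ω | bathtubLevel μ g x < g ω} ≤ x := by
  set t₀ := bathtubLevel μ g x
  rcases eq_or_ne t₀ ∞ with h | h
  · simp [h]
  obtain ⟨u, hu_anti, hu_mem, hu_lim⟩ := exists_seq_strictAnti_tendsto' (lt_top_iff_ne_top.2 h)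
  have hunion : {ω | t₀ < g ω} = ⋃ n, {ω | u n < g ω} := by
    ext ω
    simp only [mem_iUnion]
    exact ⟨fun hω => (hu_lim.eventually (gt_mem_nhds hω)).exists,
      fun ⟨n, hn⟩ => (hu_mem n).1.trans hn⟩
  have hmono : Monotone fun n => {ω | u n < g ω} := fun m n hmn ω hω =>
    (hu_anti.antitone hmn).trans_lt hω
  rw [hunion, hmono.measure_iUnion]
  refine iSup_le fun n => ?_
  obtain ⟨s, hs, hsu⟩ := sInf_lt_iff.1 (hu_mem n).1
  exact (measure_mono fun ω hω => hsu.trans hω).trans hs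

theorem le_measure_bathtubLevel_le {g : Ω → ℝ≥0∞} (hg : Measurable g)
    (hgi : ∫⁻ ω, g ω ∂μ ≠ ∞) {x : ℝ≥0∞} (h0 : bathtubLevel μ g x ≠ 0) :
    x ≤ μ {ω | bathtubLevel μ g x ≤ g ω} := by
  set t₀ := bathtubLevel μ g x
  obtain ⟨u, hu_mono, hu_mem, hu_lim⟩ := exists_seq_strictMono_tendsto' (pos_iff_ne_zero.2 h0)
  have hinter : {ω | t₀ ≤ g ω} = ⋂ n, {ω | u n < g ω} := by
    ext ω
    simp only [mem_iInter]
    exact ⟨fun hω n => (hu_mem n).2.trans_le hω,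
      fun hω => le_of_tendsto' hu_lim fun n => (hω n).le⟩
  have hfin : μ {ω | u 0 < g ω} ≠ ∞ := by
    refine ne_top_of_le_ne_top (ENNReal.div_ne_top hgi (hu_mem 0).1.ne') ?_
    exact (measure_mono fun ω (hω : u 0 < g ω) => hω.le).trans
      (meas_ge_le_lintegral_div hg.aemeasurable (hu_mem 0).1.ne' (hu_mem 0).2.ne_top)
  have hanti : Antitone fun n => {ω | u n < g ω} := fun m n hmn ω hω =>
    (hu_mono.monotone hmn).trans_lt hω
  rw [hinter, hanti.measure_iInter
    (fun n => (measurableSet_lt measurable_const hg).nullMeasurableSet) ⟨0, hfin⟩]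
  refine le_iInf fun n => ?_
  by_contra! h
  exact (hu_mem n).2.not_ge (sInf_le h.le)

theorem measure_sdiff_le_measure_sdiff {B C : Set Ω} (hB : MeasurableSet B) (hC : MeasurableSet C)
    (hBC : μ B ≤ μ C) (hC_fin : μ C ≠ ∞) : μ (B \ C) ≤ μ (C \ B) := by
  have hfin : μ (B ∩ C) ≠ ∞ := ne_top_of_le_ne_top hC_fin (measure_mono inter_subset_right)
  refine (ENNReal.add_le_add_iff_left hfin).1 ?_
  rw [measure_inter_add_sdiff B hC, inter_comm, measure_inter_add_sdiff C hB]
  exact hBC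

theorem withDensity_apply_le_of_le_of_le {g : Ω → ℝ≥0∞} (hg : Measurable g) {B C : Set Ω}
    (hB : MeasurableSet B) (hC : MeasurableSet C) {t : ℝ≥0∞} (hCB : ∀ ω ∈ C \ B, t ≤ g ω)
    (hBC : ∀ ω ∈ B \ C, g ω ≤ t) (hμ : t * μ (B \ C) ≤ t * μ (C \ B)) :
    μ.withDensity g B ≤ μ.withDensity g C := by
  have hsdiff : μ.withDensity g (B \ C) ≤ μ.withDensity g (C \ B) := calc
    μ.withDensity g (B \ C) ≤ ∫⁻ _ in B \ C, t ∂μ := by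
        rw [withDensity_apply _ (hB.diff hC)]; exact setLIntegral_mono measurable_const hBC
    _ = t * μ (B \ C) := setLIntegral_const _ _
    _ ≤ t * μ (C \ B) := hμ
    _ = ∫⁻ _ in C \ B, t ∂μ := (setLIntegral_const _ _).symm
    _ ≤ μ.withDensity g (C \ B) := by
        rw [withDensity_apply _ (hC.diff hB)]; exact setLIntegral_mono hg hCB
  calc μ.withDensity g B = μ.withDensity g (B ∩ C) + μ.withDensity g (B \ C) :=
        (measure_inter_add_sdiff B hC).symm
    _ ≤ μ.withDensity g (C ∩ B) + μ.withDensity g (C \ B) := by rw [inter_comm]; gcongr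
    _ = μ.withDensity g C := measure_inter_add_sdiff C hB

/-- The bathtub principle: fill `N` from the highest values of `g` down to the level
`bathtubLevel`, using Sierpiński's theorem to fill exactly up to `x` within the level set. -/
theorem Measure.AtomlessOn.exists_isMaxOn_withDensity [SigmaFinite μ] {g : Ω → ℝ≥0∞}
    (hg : Measurable g) (hgi : ∫⁻ ω, g ω ∂μ ≠ ∞) {N : Set Ω} (hN : μ.AtomlessOn N)
    (hNm : MeasurableSet N)
    {x : ℝ≥0∞} (hx : x ≠ ∞) :
    ∃ C ⊆ N, MeasurableSet C ∧ μ C ≤ x ∧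
      ∀ B ⊆ N, MeasurableSet B → μ B ≤ x → μ.withDensity g B ≤ μ.withDensity g C := by
  set t₀ := bathtubLevel (μ.restrict N) g x
  have hlt : MeasurableSet {ω | t₀ < g ω} := measurableSet_lt measurable_const hg
  have hle : MeasurableSet {ω | t₀ ≤ g ω} := measurableSet_le measurable_const hg
  set E := N ∩ {ω | t₀ < g ω}
  set D := N ∩ {ω | t₀ ≤ g ω}
  have hEx : μ E ≤ x := by
    have := measure_bathtubLevel_lt_le (μ := μ.restrict N) g x
    rwa [Measure.restrict_apply hlt, inter_comm] at this
  have hxD : t₀ ≠ 0 → x ≤ μ D := fun h => by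
    have := le_measure_bathtubLevel_le (μ := μ.restrict N) hg
      (ne_top_of_le_ne_top hgi (setLIntegral_le_lintegral N g)) h
    rwa [Measure.restrict_apply hle, inter_comm] at this
  have hED : E ⊆ D := inter_subset_inter_right N fun ω (h : t₀ < g ω) => h.le
  obtain ⟨C, hC, hEC, hCD, hμC⟩ :=
    (hN.mono (sdiff_subset.trans inter_subset_left)).exists_measure_eq (hNm.inter hlt)
      (hNm.inter hle) hED (le_min hEx (measure_mono hED)) (min_le_right _ _)
      (ne_top_of_le_ne_top hx (min_le_left _ _))
  refine ⟨C, hCD.trans inter_subset_left, hC, hμC ▸ min_le_left _ _, fun B hBN hB hBx => ?_⟩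
  refine withDensity_apply_le_of_le_of_le hg hB hC (t := t₀) (fun ω hω => (hCD hω.1).2)
    (fun ω hω => not_lt.1 fun h => hω.2 (hEC ⟨hBN hω.1, h⟩)) ?_
  rcases eq_or_ne t₀ 0 with h | h
  · simp [h]
  · have hCx : μ C = x := hμC.trans (min_eq_left (hxD h))
    exact mul_le_mul_right (measure_sdiff_le_measure_sdiff hB hC (hBx.trans hCx.ge) (hCx ▸ hx)) t₀

noncomputable def largestOn (μ ν : Measure Ω) (N : Set Ω) (x : ℝ≥0∞) : ℝ≥0∞ :=
  ⨆ C ∈ {C | MeasurableSet C ∧ C ⊆ N ∧ μ C ≤ x}, ν C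

theorem le_largestOn {ν : Measure Ω} {N C : Set Ω} {x : ℝ≥0∞} (hC : MeasurableSet C)
    (hCN : C ⊆ N) (hCx : μ C ≤ x) : ν C ≤ largestOn μ ν N x :=
  le_biSup (fun C => ν C) (show C ∈ {C | MeasurableSet C ∧ C ⊆ N ∧ μ C ≤ x} from ⟨hC, hCN, hCx⟩)

theorem largestOn_mono (ν : Measure Ω) (N : Set Ω) : Monotone (largestOn μ ν N) :=
  fun _ _ hxy => biSup_mono fun _ hC => ⟨hC.1, hC.2.1, hC.2.2.trans hxy⟩

/-- A set of measure `≤ x + δ` is cut into a set of measure `x` and a remainder of measure `≤ δ`,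
on which `∫⁻ g` is small by absolute continuity. -/
theorem Measure.AtomlessOn.exists_largestOn_add_le [SigmaFinite μ] {N : Set Ω}
    (hN : μ.AtomlessOn N) {g : Ω → ℝ≥0∞} (hgi : ∫⁻ ω, g ω ∂μ ≠ ∞) {x : ℝ≥0∞} (hx : x ≠ ∞)
    {ε : ℝ≥0∞} (hε : ε ≠ 0) :
    ∃ δ ≠ 0, largestOn μ (μ.withDensity g) N (x + δ) ≤ largestOn μ (μ.withDensity g) N x + ε := by
  obtain ⟨δ, hδ, hsmall⟩ := exists_pos_setLIntegral_lt_of_measure_lt hgi hε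
  obtain ⟨δ', hδ', hδ'δ⟩ := exists_between hδ
  refine ⟨δ', hδ'.ne', iSup₂_le fun C ⟨hC, hCN, hCx⟩ => ?_⟩
  rcases le_total (μ C) x with hle | hle
  · exact le_add_right (le_largestOn hC hCN hle)
  obtain ⟨C', hC', -, hC'C, hμC'⟩ := AtomlessOn.exists_measure_eq (hN.mono (sdiff_subset.trans hCN))
    MeasurableSet.empty hC (empty_subset C) (by simp) hle hx
  have hrest : μ (C \ C') < δ := by
    rw [measure_sdiff hC'C hC'.nullMeasurableSet (hμC' ▸ hx), hμC']
    exact (tsub_le_iff_left.2 hCx).trans_lt hδ'δ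
  calc μ.withDensity g C = μ.withDensity g C' + μ.withDensity g (C \ C') := by
        rw [← measure_inter_add_sdiff C hC', inter_eq_self_of_subset_right hC'C]
    _ ≤ largestOn μ (μ.withDensity g) N x + ε := by
        gcongr
        · exact le_largestOn hC' (hC'C.trans hCN) hμC'.le
        · rw [withDensity_apply _ (hC.diff hC')]
          exact (hsmall _ hrest).le

theorem measure_eq_tsum_inter_add_inter_compl (m : Measure Ω) {A : ℕ → Set Ω}
    (hA : ∀ i, MeasurableSet (A i)) (hA_disj : Pairwise (Disjoint on A)) {B : Set Ω}
    (hB : MeasurableSet B) : m B = ∑' i, m (B ∩ A i) + m (B ∩ (⋃ i, A i)ᶜ) := by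
  rw [← measure_iUnion (fun i j hij => (hA_disj hij).mono inter_subset_right inter_subset_right)
    (fun i => hB.inter (hA i)), ← inter_iUnion, ← sdiff_eq,
    measure_inter_add_sdiff B (MeasurableSet.iUnion hA)]

theorem measure_biUnion_union_eq (m : Measure Ω) {A : ℕ → Set Ω} (hA : ∀ i, MeasurableSet (A i))
    (hA_disj : Pairwise (Disjoint on A)) (I : Set ℕ) {C : Set Ω} (hC : MeasurableSet C)
    (hCA : C ⊆ (⋃ i, A i)ᶜ) :
    m ((⋃ i ∈ I, A i) ∪ C) = ∑' i, I.indicator (fun i => m (A i)) i + m C := by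
  have hdisj : Disjoint (⋃ i ∈ I, A i) C :=
    (disjoint_compl_right.mono_left (iUnion₂_subset fun i _ => subset_iUnion A i)).mono_right hCA
  rw [measure_union hdisj hC, measure_biUnion I.to_countable (hA_disj.set_pairwise I)
    fun i _ => hA i, tsum_subtype I fun i => m (A i)]

theorem measure_inter_eq_indicator {A : ℕ → Set Ω} (hA : ∀ i, A i = ∅ ∨ μ.IsAtom (A i))
    {B : Set Ω} (hB : MeasurableSet B) (i : ℕ) :
    μ (B ∩ A i) = {i | μ (A i \ B) = 0}.indicator (fun i => μ (A i)) i := by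
  by_cases hi : i ∈ {i | μ (A i \ B) = 0}
  · rw [indicator_of_mem hi, ← measure_inter_add_sdiff (A i) hB, hi, add_zero, inter_comm]
  · rw [indicator_of_notMem hi]
    rcases hA i with h | h
    · simp [h]
    · exact (h.measure_inter_eq_zero_or_measure_sdiff_eq_zero hB).resolve_right hi

theorem exists_measure_eq_tsum_indicator_add_and_withDensity_le {A : ℕ → Set Ω}
    (hA : ∀ i, A i = ∅ ∨ μ.IsAtom (A i)) (hA_disj : Pairwise (Disjoint on A)) (g : Ω → ℝ≥0∞)
    {B : Set Ω} (hB : MeasurableSet B) :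
    ∃ J : Set ℕ, μ B = ∑' i, J.indicator (fun i => μ (A i)) i + μ (B ∩ (⋃ i, A i)ᶜ) ∧
      μ.withDensity g B ≤ ∑' i, J.indicator (fun i => μ.withDensity g (A i)) i +
        largestOn μ (μ.withDensity g) (⋃ i, A i)ᶜ (μ (B ∩ (⋃ i, A i)ᶜ)) := by
  have hAm : ∀ i, MeasurableSet (A i) := fun i => (hA i).elim (· ▸ MeasurableSet.empty) (·.1)
  set J := {i | μ (A i \ B) = 0}
  refine ⟨J, ?_, ?_⟩
  · rw [← tsum_congr (measure_inter_eq_indicator hA hB)]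
    exact measure_eq_tsum_inter_add_inter_compl μ hAm hA_disj hB
  rw [measure_eq_tsum_inter_add_inter_compl _ hAm hA_disj hB]
  gcongr with i
  · by_cases hi : i ∈ J
    · rw [indicator_of_mem hi]
      exact measure_mono inter_subset_right
    · rw [indicator_of_notMem hi]
      refine (withDensity_absolutelyContinuous μ g ?_).le
      rw [measure_inter_eq_indicator hA hB, indicator_of_notMem hi]
  · exact le_largestOn (hB.inter (MeasurableSet.iUnion hAm).compl) inter_subset_right le_rfl

theorem exists_isMax_withDensity_of_measurable [SigmaFinite μ] {g : Ω → ℝ≥0∞}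
    (hg : Measurable g) (hgi : ∫⁻ ω, g ω ∂μ ≠ ∞) {K : ℝ≥0∞} (hK : K ≠ ∞) :
    ∃ A, MeasurableSet A ∧ μ A ≤ K ∧
      ∀ B, MeasurableSet B → μ B ≤ K → μ.withDensity g B ≤ μ.withDensity g A := by
  set ν := μ.withDensity g
  have : IsFiniteMeasure ν := isFiniteMeasure_withDensity hgi
  obtain ⟨A, hA, hA_disj, hN⟩ := μ.exists_atoms_atomlessOn_compl
  have hAm : ∀ i, MeasurableSet (A i) := fun i => (hA i).elim (· ▸ MeasurableSet.empty) (·.1)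
  set N := (⋃ i, A i)ᶜ
  have hb : ∑' i, ν (A i) ≠ ∞ := by
    rw [← measure_iUnion hA_disj hAm]
    exact measure_ne_top ν _
  obtain ⟨I, x, hIx, hmax⟩ := exists_isMax_tsum_indicator_add hb (largestOn_mono ν N)
    (fun x hx ε hε => hN.exists_largestOn_add_le hgi hx hε) hK
  obtain ⟨C, hCN, hC, hCx, hCmax⟩ := hN.exists_isMaxOn_withDensity hg hgi
    (MeasurableSet.iUnion hAm).compl (ne_top_of_le_ne_top hK (le_add_self.trans hIx))
  refine ⟨(⋃ i ∈ I, A i) ∪ C, (MeasurableSet.biUnion I.to_countable fun i _ => hAm i).union hC,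
    ?_, fun B hB hBK => ?_⟩
  · rw [measure_biUnion_union_eq μ hAm hA_disj I hC hCN]
    exact (by gcongr : _ ≤ ∑' i, I.indicator (fun i => μ (A i)) i + x).trans hIx
  obtain ⟨J, hμB, hνB⟩ := exists_measure_eq_tsum_indicator_add_and_withDensity_le hA hA_disj g hB
  calc ν B ≤ ∑' i, J.indicator (fun i => ν (A i)) i + largestOn μ ν N (μ (B ∩ N)) := hνB
    _ ≤ ∑' i, I.indicator (fun i => ν (A i)) i + largestOn μ ν N x := hmax J _ (hμB ▸ hBK)
    _ ≤ ∑' i, I.indicator (fun i => ν (A i)) i + ν C := by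
        gcongr
        exact iSup₂_le fun C' ⟨hC', hC'N, hC'x⟩ => hCmax C' hC'N hC' hC'x
    _ = ν ((⋃ i ∈ I, A i) ∪ C) := (measure_biUnion_union_eq ν hAm hA_disj I hC hCN).symm

theorem exists_isMax_withDensity [SigmaFinite μ] {g : Ω → ℝ≥0∞} (hg : AEMeasurable g μ)
    (hgi : ∫⁻ ω, g ω ∂μ ≠ ∞) {K : ℝ≥0∞} (hK : K ≠ ∞) :
    ∃ A, MeasurableSet A ∧ μ A ≤ K ∧
      ∀ B, MeasurableSet B → μ B ≤ K → μ.withDensity g B ≤ μ.withDensity g A := by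
  rw [withDensity_congr_ae hg.ae_eq_mk]
  exact exists_isMax_withDensity_of_measurable hg.measurable_mk
    (by rwa [← lintegral_congr_ae hg.ae_eq_mk]) hK

end MeasureTheory

theorem stmt14_general {Ω : Type*} [MeasurableSpace Ω] (μ : Measure Ω) [SigmaFinite μ]
    (u : Ω → ℝ) (hu : Integrable u μ)
    (K : ℝ≥0∞) (hK : K < μ Set.univ) :
    ∃ A : Set Ω, MeasurableSet A ∧ μ A ≤ K ∧ largestK μ K u = ∫ x in A, |u x| ∂μ := by
  have : IsFiniteMeasure (μ.withDensity fun x => ‖u x‖ₑ) := isFiniteMeasure_withDensity hu.2.ne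
  have hint : ∀ B, MeasurableSet B →
      ∫ x in B, |u x| ∂μ = (μ.withDensity (fun x => ‖u x‖ₑ) B).toReal := fun B hB => by
    rw [withDensity_apply _ hB, ← integral_norm_eq_lintegral_enorm hu.1.restrict]
    rfl
  obtain ⟨A, hA, hAK, hAmax⟩ := exists_isMax_withDensity hu.1.enorm hu.2.ne hK.ne_top
  refine ⟨A, hA, hAK, IsGreatest.csSup_eq ⟨⟨A, hA, hAK, rfl⟩, ?_⟩⟩
  rintro r ⟨B, hB, hBK, rfl⟩
  rw [hint B hB, hint A hA]
  exact ENNReal.toReal_mono (measure_ne_top _ _) (hAmax B hB hBK)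

/-- for any σ-finite measure space (possibly with atoms), `u ∈ L¹` and
`K ∈ (0, μ(Ω))`, the supremum in the largest-K-norm is attained: there is a measurable
`A` with `μ A ≤ K` and `|u|_K = ∫_A |u| dμ`. -/
theorem stmt14 {Ω : Type*} [MeasurableSpace Ω] (μ : Measure Ω) [SigmaFinite μ]
    (u : Ω → ℝ) (hu : Integrable u μ)
    (K : ℝ≥0∞) (hK0 : 0 < K) (hK : K < μ Set.univ) :
    ∃ A : Set Ω, MeasurableSet A ∧ μ A ≤ K ∧ largestK μ K u = ∫ x in A, |u x| ∂μ :=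
  stmt14_general μ u hu K hK
end

section
/- Let X be a reflexive Banach space compactly embedded in L^1(Ω), f : X → ℝ ∪ {+∞} proper, lower semicontinuous, convex, bounded from below and coercive, and suppose there exists u_0 ∈ X with f(u_0) < ∞ and ‖u_0‖_0 ≤ K, where K ∈ (0, μ(Ω)). Then the problem min_{u ∈ X} f(u) subject to ‖u‖_0 ≤ K admits a global solution. -/
/-!
Minimize `f` over the feasible points of a closed ball containing the sublevel set `{f ≤ f u₀}`
(bounded by coercivity). This set is weakly compact: the ball is weakly compact by reflexivity,
on it the compact embedding `ι` is continuous from the weak topology to the norm topology of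
`L¹`, and there the constraint `‖v‖₀ ≤ K` is closed (an `L¹` limit is an a.e. limit of a
subsequence, and a.e. limits cannot enlarge supports). Convexity makes the sublevel sets of `f`
convex, hence weakly closed, so `f` is weakly lower semicontinuous and attains its minimum on
this set; points outside the ball are worse than `u₀`.
-/

open MeasureTheory Set Filter Bornology Metric
open scoped ENNReal Topology

theorem IsCompact.continuousOn_image_of_leftInvOn {α β : Type*} [TopologicalSpace α]
    [TopologicalSpace β] [T2Space β] {f : α → β} {g : β → α} {s : Set α}
    (hs : IsCompact s) (hf : ContinuousOn f s) (hleft : LeftInvOn g f s) :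
    ContinuousOn g (f '' s) := by
  refine continuousOn_iff_isClosed.2 fun t ht => ⟨f '' (t ∩ s), ?_, ?_⟩
  · exact ((hs.inter_left ht).image_of_continuousOn (hf.mono inter_subset_right)).isClosed
  · rw [← hleft.image_inter', inter_eq_left.2 (image_mono inter_subset_right)]

section WeakTopology

variable {E : Type*} [AddCommGroup E] [Module ℝ E] [TopologicalSpace E] [IsTopologicalAddGroup E]
  [ContinuousSMul ℝ E] [LocallyConvexSpace ℝ E]

theorem Convex.isClosed_toWeakSpace_image {s : Set E} (hs : Convex ℝ s) (hc : IsClosed s) :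
    IsClosed (toWeakSpace ℝ E '' s) := by
  rw [← hc.closure_eq, hs.toWeakSpace_closure ℝ]
  exact isClosed_closure

theorem LowerSemicontinuous.comp_toWeakSpace_symm {β : Type*} [LinearOrder β] {f : E → β}
    (hf : LowerSemicontinuous f) (hq : QuasiconvexOn ℝ univ f) :
    LowerSemicontinuous (f ∘ (toWeakSpace ℝ E).symm) := by
  refine lowerSemicontinuous_iff_isClosed_preimage.2 fun y => ?_
  have hconv : Convex ℝ {x | f x ≤ y} := by simpa using hq y
  rw [preimage_comp, ← LinearEquiv.image_eq_preimage_symm]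
  exact hconv.isClosed_toWeakSpace_image (hf.isClosed_preimage y)

end WeakTopology

section Reflexive

variable {X : Type*} [NormedAddCommGroup X] [NormedSpace ℝ X]

theorem isCompact_toWeakSpace_image_of_isBounded
    (hrefl : Function.Surjective (NormedSpace.inclusionInDoubleDual ℝ X)) {s : Set X}
    (hb : IsBounded s) (hs : Convex ℝ s) (hc : IsClosed s) :
    IsCompact (toWeakSpace ℝ X '' s) := by
  have hrange : range (NormedSpace.inclusionInDoubleDualWeak ℝ X) = univ :=
    range_eq_univ.2 fun φ => (hrefl φ).imp fun x hx => congrArg StrongDual.toWeakDual hx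
  rw [← (hs.isClosed_toWeakSpace_image hc).closure_eq]
  refine NormedSpace.isCompact_closure_of_isBounded ℝ X _ ?_ (hrange ▸ subset_univ _)
  rwa [(toWeakSpace ℝ X).injective.preimage_image]

theorem ContinuousLinearMap.continuousOn_toWeakSpace_symm_of_isCompact_closure
    {E : Type*} [NormedAddCommGroup E] [NormedSpace ℝ E] (ι : X →L[ℝ] E) {s : Set X}
    (hs : IsCompact (closure (ι '' s))) :
    ContinuousOn (ι ∘ (toWeakSpace ℝ X).symm) (toWeakSpace ℝ X '' s) := by
  have hweak : ContinuousOn (toWeakSpace ℝ E).symm (toWeakSpace ℝ E '' closure (ι '' s)) :=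
    hs.continuousOn_image_of_leftInvOn (toWeakSpaceCLM ℝ E).continuous.continuousOn
      fun x _ => (toWeakSpace ℝ E).symm_apply_apply x
  refine hweak.comp (WeakSpace.map ι).continuous.continuousOn ?_
  rintro _ ⟨x, hx, rfl⟩
  exact ⟨ι x, subset_closure (mem_image_of_mem ι hx), rfl⟩

theorem isCompact_toWeakSpace_image_inter_preimage
    (hrefl : Function.Surjective (NormedSpace.inclusionInDoubleDual ℝ X))
    {E : Type*} [NormedAddCommGroup E] [NormedSpace ℝ E] (ι : X →L[ℝ] E) {s : Set X}
    (hb : IsBounded s) (hs : Convex ℝ s) (hc : IsClosed s) (hι : IsCompact (closure (ι '' s)))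
    {t : Set E} (ht : IsClosed t) :
    IsCompact (toWeakSpace ℝ X '' (s ∩ ι ⁻¹' t)) := by
  have hK := isCompact_toWeakSpace_image_of_isBounded hrefl hb hs hc
  refine hK.of_isClosed_subset ?_ (image_mono inter_subset_left)
  have := (ι.continuousOn_toWeakSpace_symm_of_isCompact_closure hι).preimage_isClosed_of_isClosed
    hK.isClosed ht
  rwa [image_inter (toWeakSpace ℝ X).injective,
    LinearEquiv.image_eq_preimage_symm _ (ι ⁻¹' t)]

end Reflexive

theorem quasiconvexOn_univ_of_le_convexCombination {E : Type*} [AddCommGroup E] [Module ℝ E]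
    {f : E → EReal}
    (hconv : ∀ u v : E, ∀ θ : ℝ, 0 ≤ θ → θ ≤ 1 →
      f (θ • u + (1 - θ) • v) ≤ (θ : EReal) * f u + ((1 - θ : ℝ) : EReal) * f v) :
    QuasiconvexOn ℝ univ f := by
  rintro r u ⟨-, hu⟩ v ⟨-, hv⟩ a b ha hb hab
  obtain rfl : b = 1 - a := by linarith
  refine ⟨mem_univ _, (hconv u v a ha (by linarith)).trans ?_⟩
  calc (a : EReal) * f u + ((1 - a : ℝ) : EReal) * f v
      ≤ (a : EReal) * r + ((1 - a : ℝ) : EReal) * r := by gcongr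
    _ = r := by
        rw [← EReal.right_distrib_of_nonneg (by exact_mod_cast ha) (by exact_mod_cast hb),
          ← EReal.coe_add, add_sub_cancel, EReal.coe_one, one_mul]

theorem isBounded_setOf_le_of_tendsto_top {X β : Type*} [SeminormedAddCommGroup X]
    [LinearOrder β] [OrderTop β] [TopologicalSpace β] [ClosedIicTopology β] {f : X → β}
    (hcoer : ∀ u : ℕ → X, Tendsto (fun n => ‖u n‖) atTop atTop →
      Tendsto (fun n => f (u n)) atTop (𝓝 ⊤))
    {t : β} (ht : t < ⊤) : IsBounded {u | f u ≤ t} := by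
  rw [isBounded_iff_forall_norm_le]
  by_contra! h
  choose u hut hu using h
  have hnorm : Tendsto (fun n : ℕ => ‖u n‖) atTop atTop :=
    tendsto_atTop_mono (fun n => (hu n).le) tendsto_natCast_atTop_atTop
  obtain ⟨n, hn⟩ := ((hcoer _ hnorm).eventually (eventually_gt_nhds ht)).exists
  exact (hut n).not_gt hn

theorem MeasureTheory.Lp.isClosed_setOf_measure_support_le {Ω E : Type*} [MeasurableSpace Ω]
    (μ : Measure Ω) [NormedAddCommGroup E] {p : ℝ≥0∞} [Fact (1 ≤ p)] (K : ℝ≥0∞) :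
    IsClosed {v : Lp E p μ | μ (Function.support v) ≤ K} := by
  refine IsSeqClosed.isClosed fun v w hv hvw => ?_
  obtain ⟨ns, -, hae⟩ := (tendstoInMeasure_of_tendsto_Lp hvw).exists_seq_tendsto_ae
  set T : ℕ → Set Ω := fun N => ⋂ i ≥ N, Function.support (v (ns i))
  have hT : Monotone T := fun M N hMN =>
    biInter_subset_biInter_left fun i (hi : N ≤ i) => hMN.trans hi
  have hsupp : Function.support w ≤ᵐ[μ] ⋃ N, T N := by
    filter_upwards [hae] with x hx hwx
    obtain ⟨N, hN⟩ := (hx.eventually_ne hwx).exists_forall_of_atTop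
    exact mem_iUnion.2 ⟨N, mem_iInter₂.2 hN⟩
  calc μ (Function.support w) ≤ μ (⋃ N, T N) := measure_mono_ae hsupp
    _ = ⨆ N, μ (T N) := hT.measure_iUnion
    _ ≤ K := iSup_le fun N => (measure_mono (biInter_subset_of_mem le_rfl)).trans (hv (ns N))

theorem stmt17_general {Ω : Type*} [MeasurableSpace Ω] (μ : Measure Ω)
    {X : Type*} [NormedAddCommGroup X] [NormedSpace ℝ X]
    (hrefl : Function.Surjective (NormedSpace.inclusionInDoubleDual ℝ X))
    (ι : X →L[ℝ] Lp ℝ 1 μ)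
    (hcpt : ∀ s : Set X, Bornology.IsBounded s → IsCompact (closure (⇑ι '' s)))
    (f : X → EReal)
    (hconv : ∀ u v : X, ∀ θ : ℝ, 0 ≤ θ → θ ≤ 1 →
      f (θ • u + (1 - θ) • v) ≤ (θ : EReal) * f u + ((1 - θ : ℝ) : EReal) * f v)
    (hlsc : LowerSemicontinuous f)
    (hcoer : ∀ u : ℕ → X, Tendsto (fun n => ‖u n‖) atTop atTop →
      Tendsto (fun n => f (u n)) atTop (𝓝 (⊤ : EReal)))
    (K : ℝ≥0∞)
    (u₀ : X) (hu₀ : f u₀ < ⊤) (hu₀K : μ (Function.support (⇑(ι u₀))) ≤ K) :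
    ∃ ustar : X, μ (Function.support (⇑(ι ustar))) ≤ K ∧
      ∀ u : X, μ (Function.support (⇑(ι u))) ≤ K → f ustar ≤ f u := by
  obtain ⟨R, hR⟩ :=
    (isBounded_iff_subset_closedBall 0).1 (isBounded_setOf_le_of_tendsto_top hcoer hu₀)
  set feasible := {v : Lp ℝ 1 μ | μ (Function.support v) ≤ K}
  set S := closedBall (0 : X) R ∩ ι ⁻¹' feasible
  have hS : IsCompact (toWeakSpace ℝ X '' S) :=
    isCompact_toWeakSpace_image_inter_preimage hrefl ι isBounded_closedBall (convex_closedBall 0 R)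
      isClosed_closedBall (hcpt _ isBounded_closedBall) (Lp.isClosed_setOf_measure_support_le μ K)
  have hu₀S : u₀ ∈ S := ⟨hR (le_refl (f u₀)), hu₀K⟩
  have hweak := hlsc.comp_toWeakSpace_symm (quasiconvexOn_univ_of_le_convexCombination hconv)
  obtain ⟨_, ⟨ustar, hustar, rfl⟩, hmin_weak⟩ :=
    (hweak.lowerSemicontinuousOn _).exists_isMinOn ⟨_, mem_image_of_mem _ hu₀S⟩ hS
  have hmin : ∀ u ∈ S, f ustar ≤ f u := fun u hu =>
    isMinOn_iff.1 hmin_weak _ (mem_image_of_mem _ hu)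
  refine ⟨ustar, hustar.2, fun u hu => ?_⟩
  by_cases hfu : f u ≤ f u₀
  · exact hmin u ⟨hR hfu, hu⟩
  · exact (hmin u₀ hu₀S).trans (not_le.1 hfu).le

/-- let `X` be a reflexive Banach space (the inclusion into the double dual
is surjective) compactly embedded into `L¹(Ω)` via `ι`, and let `f : X → ℝ ∪ {+∞}`
(modeled as `EReal`-valued, never `⊥`) be proper, convex, lower semicontinuous, bounded
from below and coercive. If there is a feasible point `u₀` with `f u₀ < ∞` and
`‖u₀‖₀ ≤ K`, then the problem `min f(u) s.t. ‖u‖₀ ≤ K` has a global solution. -/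
theorem stmt17 {Ω : Type*} [MeasurableSpace Ω] (μ : Measure Ω) [SigmaFinite μ]
    {X : Type*} [NormedAddCommGroup X] [NormedSpace ℝ X] [CompleteSpace X]
    (hrefl : Function.Surjective (NormedSpace.inclusionInDoubleDual ℝ X))
    (ι : X →L[ℝ] Lp ℝ 1 μ) (hinj : Function.Injective ι)
    (hcpt : ∀ s : Set X, Bornology.IsBounded s → IsCompact (closure (⇑ι '' s)))
    (f : X → EReal)
    (hbot : ∀ u, f u ≠ ⊥)
    (hconv : ∀ u v : X, ∀ θ : ℝ, 0 ≤ θ → θ ≤ 1 →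
      f (θ • u + (1 - θ) • v) ≤ (θ : EReal) * f u + ((1 - θ : ℝ) : EReal) * f v)
    (hlsc : LowerSemicontinuous f)
    (hbd : ∃ c : ℝ, ∀ u, (c : EReal) ≤ f u)
    (hcoer : ∀ u : ℕ → X, Tendsto (fun n => ‖u n‖) atTop atTop →
      Tendsto (fun n => f (u n)) atTop (𝓝 (⊤ : EReal)))
    (K : ℝ≥0∞) (hK0 : 0 < K) (hK : K < μ Set.univ)
    (u₀ : X) (hu₀ : f u₀ < ⊤) (hu₀K : μ (Function.support (⇑(ι u₀))) ≤ K) :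
    ∃ ustar : X, μ (Function.support (⇑(ι ustar))) ≤ K ∧
      ∀ u : X, μ (Function.support (⇑(ι u))) ≤ K → f ustar ≤ f u :=
  stmt17_general μ hrefl ι hcpt f hconv hlsc hcoer K u₀ hu₀ hu₀K
end

section
/- Let u_h be a continuous piecewise linear finite element function on a simplicial triangulation 𝒯 = {T_1,…,T_m} of a domain Ω ⊆ ℝ^d with nodal values u ∈ ℝ^N, and let w_u ∈ ℝ^m be defined by (w_u)_i := sum of |u_j| over all nodes j that are vertices of T_i. Then the Lebesgue measure of the support of u_h equals Σ_{i : (w_u)_i ≠ 0} μ(T_i); consequently, for K ∈ (0, μ(Ω)), ‖u_h‖_0 ≤ K if and only if ‖w_u‖_{1,μ(𝒯)} − |w_u|_{K,μ(𝒯)} = 0, where ‖w‖_{1,μ(𝒯)} := Σ_i μ(T_i)|w_i| and |w|_{K,μ(𝒯)} := max { Σ_{i∈I} μ(T_i)|w_i| : I ⊆ {1,…,m}, Σ_{i∈I} μ(T_i) ≤ K }. -/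
open MeasureTheory Set Function
open scoped ENNReal

/-!
On a simplex `T`, `u_h` agrees with an affine function `g`. If `g` vanishes at all vertices
it vanishes on their convex hull `T`; otherwise its zero set is a proper affine subspace, hence
Lebesgue-null, and `u_h ≠ 0` almost everywhere on `T`. Summing over the a.e. disjoint simplices
gives the measure of the support. For the second claim, the index set `{i | w i ≠ 0}` is
admissible for `|w|_K` exactly when the support has measure at most `K`, and it realises the full
norm `‖w‖₁`; conversely a maximiser realising `‖w‖₁` must contain every `i` with
`μ(Tᵢ) |wᵢ| > 0`, so its mass dominates that of `{i | w i ≠ 0}`.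
-/

theorem Set.EqOn.inter_support_eq {α M : Type*} [Zero M] {f g : α → M} {s : Set α}
    (h : EqOn f g s) : s ∩ support f = s ∩ support g := by
  ext x
  simp only [mem_inter_iff, mem_support, and_congr_right_iff]
  intro hx
  rw [h hx]

theorem AffineMap.convexHull_subset_preimage_zero {E : Type*} [AddCommGroup E] [Module ℝ E]
    {g : E →ᵃ[ℝ] ℝ} {s : Set E} (hs : ∀ x ∈ s, g x = 0) :
    convexHull ℝ s ⊆ g ⁻¹' {0} :=
  convexHull_min hs ((convex_singleton 0).affine_preimage g)

section AffineZeroSet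

variable {E : Type*} [NormedAddCommGroup E] [NormedSpace ℝ E] [MeasurableSpace E] [BorelSpace E]
  [FiniteDimensional ℝ E] (μ : Measure E)

theorem AffineMap.addHaar_preimage_zero [μ.IsAddHaarMeasure] {g : E →ᵃ[ℝ] ℝ} {x : E}
    (hx : g x ≠ 0) : μ (g ⁻¹' {0}) = 0 := by
  have hcoe : ((affineSpan ℝ {(0 : ℝ)}).comap g : Set E) = g ⁻¹' {0} := by
    rw [AffineSubspace.coe_comap, AffineSubspace.coe_affineSpan_singleton]
  rw [← hcoe]
  refine Measure.addHaar_affineSubspace μ _ fun htop => hx ?_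
  have hmem : x ∈ ((affineSpan ℝ {(0 : ℝ)}).comap g : Set E) := by
    rw [htop]; exact AffineSubspace.mem_top ℝ E x
  simpa [hcoe] using hmem

theorem AffineMap.addHaar_inter_support [μ.IsAddHaarMeasure] {g : E →ᵃ[ℝ] ℝ} {x : E}
    (hx : g x ≠ 0) (T : Set E) : μ (T ∩ support g) = μ T := by
  rw [support_eq_preimage, preimage_compl, ← sdiff_eq,
    measure_sdiff_null (g.addHaar_preimage_zero μ hx)]

theorem AffineMap.nullMeasurableSet_inter_support (g : E →ᵃ[ℝ] ℝ) {T : Set E}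
    (hT : MeasurableSet T) : NullMeasurableSet (T ∩ support g) μ :=
  (hT.inter (measurableSet_support g.continuous_of_finiteDimensional.measurable)).nullMeasurableSet

theorem addHaar_convexHull_inter_support [μ.IsAddHaarMeasure] {ι : Type*} (p : ι → E)
    (V : Finset ι) {f : E → ℝ} {g : E →ᵃ[ℝ] ℝ} (hfg : EqOn f g (convexHull ℝ (p '' V)))
    {u : ι → ℝ} (hgu : ∀ j ∈ V, g (p j) = u j) :
    μ (convexHull ℝ (p '' V) ∩ support f) =
      if ∑ j ∈ V, |u j| ≠ 0 then μ (convexHull ℝ (p '' V)) else 0 := by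
  rw [hfg.inter_support_eq]
  split_ifs with hu
  · obtain ⟨j, hj, huj⟩ : ∃ j ∈ V, u j ≠ 0 := by
      by_contra! h
      exact hu (Finset.sum_eq_zero fun j hj => by rw [h j hj, abs_zero])
    exact g.addHaar_inter_support μ (x := p j) (by rwa [hgu j hj]) _
  · have hzero : ∀ x ∈ p '' V, g x = 0 := by
      rintro _ ⟨j, hj, rfl⟩
      rw [hgu j hj, ← abs_eq_zero]
      exact (Finset.sum_eq_zero_iff_of_nonneg fun j _ => abs_nonneg (u j)).1 (not_not.1 hu) j hj
    rw [← measure_empty (μ := μ)]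
    congr 1
    exact eq_empty_of_forall_notMem fun x ⟨hx, hgx⟩ =>
      hgx (AffineMap.convexHull_subset_preimage_zero hzero hx)

end AffineZeroSet

theorem measure_iUnion_inter_eq_sum {α ι : Type*} [MeasurableSpace α] [Fintype ι]
    {μ : Measure α} {T : ι → Set α} {A : Set α} (hT : Pairwise (AEDisjoint μ on T))
    (hA : ∀ i, NullMeasurableSet (T i ∩ A) μ) :
    μ ((⋃ i, T i) ∩ A) = ∑ i, μ (T i ∩ A) := by
  rw [iUnion_inter, measure_iUnion₀ (fun i j hij => (hT hij).mono inter_subset_left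
    inter_subset_left) hA, tsum_fintype]

section WeightedTopKNorm

variable {ι : Type*} [Fintype ι]

/-- The paper's `|w|_{K,μ(𝒯)}`, with `a i = μ(Tᵢ)`. -/
noncomputable def weightedTopKNorm (a w : ι → ℝ) (K : ℝ) : ℝ :=
  sSup {r : ℝ | ∃ I : Finset ι, (∑ i ∈ I, a i) ≤ K ∧ r = ∑ i ∈ I, a i * |w i|}

variable {a w : ι → ℝ} {K : ℝ}

theorem weightedTopKNorm_le_sum (ha : ∀ i, 0 ≤ a i) (hK : 0 ≤ K) :
    weightedTopKNorm a w K ≤ ∑ i, a i * |w i| := by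
  refine csSup_le ⟨0, ∅, by simpa using hK, by simp⟩ ?_
  rintro r ⟨I, -, rfl⟩
  exact Finset.sum_le_sum_of_subset_of_nonneg (Finset.subset_univ I)
    fun i _ _ => mul_nonneg (ha i) (abs_nonneg _)

theorem exists_sum_eq_weightedTopKNorm (hK : 0 ≤ K) :
    ∃ I : Finset ι, (∑ i ∈ I, a i) ≤ K ∧ ∑ i ∈ I, a i * |w i| = weightedTopKNorm a w K := by
  have hfin : {r : ℝ | ∃ I : Finset ι, (∑ i ∈ I, a i) ≤ K ∧ r = ∑ i ∈ I, a i * |w i|}.Finite :=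
    (finite_range fun I : Finset ι => ∑ i ∈ I, a i * |w i|).subset
      (by rintro r ⟨I, -, rfl⟩; exact ⟨I, rfl⟩)
  refine (Set.Nonempty.csSup_mem ?_ hfin).imp fun I hI => ⟨hI.1, hI.2.symm⟩
  exact ⟨0, ∅, by simpa using hK, by simp⟩

theorem sum_sub_weightedTopKNorm_eq_zero_iff (ha : ∀ i, 0 ≤ a i) (hK : 0 ≤ K) :
    (∑ i, a i * |w i|) - weightedTopKNorm a w K = 0 ↔
      ∑ i ∈ Finset.univ.filter (fun i => w i ≠ 0), a i ≤ K := by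
  classical
  rw [sub_eq_zero]
  constructor
  · intro htop
    obtain ⟨I, hIK, hI⟩ := exists_sum_eq_weightedTopKNorm (a := a) (w := w) hK
    have hmem : ∀ i, a i ≠ 0 → w i ≠ 0 → i ∈ I := by
      by_contra! ⟨i, hai, hwi, hiI⟩
      have hlt : ∑ j ∈ I, a j * |w j| < ∑ j, a j * |w j| :=
        Finset.sum_lt_sum_of_subset (Finset.subset_univ I) (Finset.mem_univ i) hiI
          (mul_pos ((ha i).lt_of_ne' hai) (abs_pos.2 hwi))
          fun j _ _ => mul_nonneg (ha j) (abs_nonneg _)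
      linarith
    calc ∑ i ∈ Finset.univ.filter (fun i => w i ≠ 0), a i
        = ∑ i ∈ (Finset.univ.filter (fun i => w i ≠ 0)).filter (· ∈ I), a i :=
          (Finset.sum_filter_of_ne fun i hi hai => hmem i hai (Finset.mem_filter.1 hi).2).symm
      _ ≤ ∑ i ∈ I, a i :=
          Finset.sum_le_sum_of_subset_of_nonneg (fun i hi => (Finset.mem_filter.1 hi).2)
            fun i _ _ => ha i
      _ ≤ K := hIK
  · intro hS
    refine le_antisymm ?_ (weightedTopKNorm_le_sum ha hK)
    refine le_csSup ⟨∑ i, a i * |w i|, ?_⟩ ⟨_, hS, ?_⟩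
    · rintro r ⟨I, -, rfl⟩
      exact Finset.sum_le_sum_of_subset_of_nonneg (Finset.subset_univ I)
        fun i _ _ => mul_nonneg (ha i) (abs_nonneg _)
    · exact (Finset.sum_subset (Finset.subset_univ _) fun i _ hi => by simp_all).symm

end WeightedTopKNorm

theorem stmt18_general (d m N : ℕ)
    (T : Fin m → Set (Fin d → ℝ))
    (p : Fin N → (Fin d → ℝ))
    (V : Fin m → Finset (Fin N))
    (hT : ∀ i, T i = convexHull ℝ (p '' (V i : Set (Fin N))))
    (hdisj : ∀ i j, i ≠ j → volume (T i ∩ T j) = 0)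
    (u : Fin N → ℝ) (uh : (Fin d → ℝ) → ℝ)
    (haff : ∀ i, ∃ g : (Fin d → ℝ) →ᵃ[ℝ] ℝ,
      Set.EqOn uh g (T i) ∧ ∀ j ∈ V i, g (p j) = u j)
    (w : Fin m → ℝ) (hw : ∀ i, w i = ∑ j ∈ V i, |u j|)
    (K : ℝ) (hK0 : 0 < K) :
    volume ((⋃ i, T i) ∩ Function.support uh) =
      ∑ i ∈ Finset.univ.filter (fun i => w i ≠ 0), volume (T i) ∧
    (volume ((⋃ i, T i) ∩ Function.support uh) ≤ ENNReal.ofReal K ↔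
      (∑ i, (volume (T i)).toReal * |w i|) -
        sSup {r : ℝ | ∃ I : Finset (Fin m),
          (∑ i ∈ I, (volume (T i)).toReal) ≤ K ∧
          r = ∑ i ∈ I, (volume (T i)).toReal * |w i|} = 0) := by
  classical
  choose g hg hgu using haff
  have hcompact : ∀ i, IsCompact (T i) := fun i =>
    hT i ▸ ((V i).finite_toSet.image p).isCompact_convexHull ℝ
  have hvol : volume ((⋃ i, T i) ∩ support uh) =
      ∑ i ∈ Finset.univ.filter (fun i => w i ≠ 0), volume (T i) := by
    rw [measure_iUnion_inter_eq_sum (fun i j => hdisj i j), Finset.sum_filter]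
    · refine Finset.sum_congr rfl fun i _ => ?_
      rw [hw i, hT i]
      exact addHaar_convexHull_inter_support volume p (V i) (hT i ▸ hg i) (hgu i)
    · intro i
      rw [(hg i).inter_support_eq]
      exact (g i).nullMeasurableSet_inter_support volume (hcompact i).isClosed.measurableSet
  refine ⟨hvol, ?_⟩
  have hfinite : ∀ i, volume (T i) ≠ ∞ := fun i => (hcompact i).measure_lt_top.ne
  rw [hvol, ENNReal.le_ofReal_iff_toReal_le (ENNReal.sum_ne_top.2 fun i _ => hfinite i) hK0.le,
    ENNReal.toReal_sum fun i _ => hfinite i]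
  exact (sum_sub_weightedTopKNorm_eq_zero_iff (fun _ => ENNReal.toReal_nonneg) hK0.le).symm

/-- let `𝒯 = {T₁,…,T_m}` be a simplicial mesh in `ℝ^d` (each `Tᵢ` the convex
hull of `d+1` affinely independent nodes, elements overlapping only in null sets), and let
`u_h` be continuous piecewise linear with nodal values `u`. With
`(w_u)ᵢ = Σ_{j vertex of Tᵢ} |u_j|`, the Lebesgue measure of the support of `u_h` (within
the mesh) equals `Σ_{i : (w_u)ᵢ ≠ 0} μ(Tᵢ)`; consequently, for `K ∈ (0, μ(Ω))`,
`‖u_h‖₀ ≤ K ↔ ‖w_u‖_{1,μ(𝒯)} − |w_u|_{K,μ(𝒯)} = 0`. -/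
theorem stmt18 (d m N : ℕ)
    (T : Fin m → Set (Fin d → ℝ))
    (p : Fin N → (Fin d → ℝ))
    (V : Fin m → Finset (Fin N))
    (hVcard : ∀ i, (V i).card = d + 1)
    (hT : ∀ i, T i = convexHull ℝ (p '' (V i : Set (Fin N))))
    (hindep : ∀ i, AffineIndependent ℝ (fun j : (V i : Set (Fin N)) => p j))
    (hdisj : ∀ i j, i ≠ j → volume (T i ∩ T j) = 0)
    (u : Fin N → ℝ) (uh : (Fin d → ℝ) → ℝ)
    (haff : ∀ i, ∃ g : (Fin d → ℝ) →ᵃ[ℝ] ℝ,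
      Set.EqOn uh g (T i) ∧ ∀ j ∈ V i, g (p j) = u j)
    (w : Fin m → ℝ) (hw : ∀ i, w i = ∑ j ∈ V i, |u j|)
    (K : ℝ) (hK0 : 0 < K) (hK : K < ∑ i, (volume (T i)).toReal) :
    volume ((⋃ i, T i) ∩ Function.support uh) =
      ∑ i ∈ Finset.univ.filter (fun i => w i ≠ 0), volume (T i) ∧
    (volume ((⋃ i, T i) ∩ Function.support uh) ≤ ENNReal.ofReal K ↔
      (∑ i, (volume (T i)).toReal * |w i|) -
        sSup {r : ℝ | ∃ I : Finset (Fin m),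
          (∑ i ∈ I, (volume (T i)).toReal) ≤ K ∧
          r = ∑ i ∈ I, (volume (T i)).toReal * |w i|} = 0) :=
  stmt18_general d m N T p V hT hdisj u uh haff w hw K hK0
end

section
/- Let K ≥ 0, λ ∈ ℝ^n with λ_i > 0, and x ∈ ℝ^n. Define the weighted largest-K-norm |x|_{K,λ} := max { Σ_{i∈I} λ_i |x_i| : I ⊆ {1,…,n}, Σ_{i∈I} λ_i ≤ K }. Let I* be an optimal index set and I*_0 := { i ∈ I* : x_i = 0 }. Then every s ∈ ℝ^n with s_i = λ_i sign(x_i) for i ∈ I* \ I*_0, s_i ∈ [−λ_i, λ_i] for i ∈ I*_0, and s_i = 0 for i ∉ I*, is a subgradient of |·|_{K,λ} at x, i.e., s^T y ≤ |y|_{K,λ} for all y ∈ ℝ^n and s^T x = |x|_{K,λ}. -/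
/-- Weighted largest-K-norm on `ℝⁿ`:
`|x|_{K,λ} = max { Σ_{i∈I} λᵢ|xᵢ| : I ⊆ {1,…,n}, Σ_{i∈I} λᵢ ≤ K }`. -/
noncomputable def wLargestK (n : ℕ) (K : ℝ) (lam x : Fin n → ℝ) : ℝ :=
  sSup {r : ℝ | ∃ I : Finset (Fin n), (∑ i ∈ I, lam i) ≤ K ∧ r = ∑ i ∈ I, lam i * |x i|}

lemma wLargestK_bdd (n : ℕ) (K : ℝ) (lam y : Fin n → ℝ) :
    BddAbove {r : ℝ | ∃ I : Finset (Fin n), (∑ i ∈ I, lam i) ≤ K ∧ r = ∑ i ∈ I, lam i * |y i|} := by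
  apply Set.Finite.bddAbove
  apply Set.Finite.subset (Set.finite_range (fun I : Finset (Fin n) => ∑ i ∈ I, lam i * |y i|))
  rintro r ⟨I, _, rfl⟩
  exact ⟨I, rfl⟩

/-- if `I*` is an optimal index set for `|x|_{K,λ}` and `s` satisfies
`sᵢ = λᵢ sign(xᵢ)` on `I* \ I*₀`, `sᵢ ∈ [−λᵢ, λᵢ]` on `I*₀ = {i ∈ I* : xᵢ = 0}`, and
`sᵢ = 0` outside `I*`, then `s` is a subgradient of `|·|_{K,λ}` at `x`:
`sᵀy ≤ |y|_{K,λ}` for all `y` and `sᵀx = |x|_{K,λ}`. -/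
theorem stmt19 (n : ℕ) (K : ℝ) (hK : 0 ≤ K)
    (lam : Fin n → ℝ) (hlam : ∀ i, 0 < lam i) (x : Fin n → ℝ)
    (Istar : Finset (Fin n)) (hfeas : (∑ i ∈ Istar, lam i) ≤ K)
    (hopt : (∑ i ∈ Istar, lam i * |x i|) = wLargestK n K lam x)
    (s : Fin n → ℝ)
    (hs1 : ∀ i ∈ Istar, x i ≠ 0 → s i = lam i * Real.sign (x i))
    (hs2 : ∀ i ∈ Istar, x i = 0 → |s i| ≤ lam i)
    (hs3 : ∀ i ∉ Istar, s i = 0) :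
    (∀ y : Fin n → ℝ, (∑ i, s i * y i) ≤ wLargestK n K lam y) ∧
    (∑ i, s i * x i) = wLargestK n K lam x := by
  have hsb : ∀ i ∈ Istar, |s i| ≤ lam i := by
    intro i hi
    by_cases hx : x i = 0
    · exact hs2 i hi hx
    · rw [hs1 i hi hx, abs_mul, abs_of_pos (hlam i)]
      rcases lt_or_gt_of_ne hx with h | h
      · rw [Real.sign_of_neg h]; simp
      · rw [Real.sign_of_pos h]; simp
  constructor
  · intro y
    have h1 : (∑ i, s i * y i) = ∑ i ∈ Istar, s i * y i := by
      rw [← Finset.sum_subset (Finset.subset_univ Istar)]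
      intro i _ hi
      rw [hs3 i hi, zero_mul]
    have h2 : (∑ i ∈ Istar, s i * y i) ≤ ∑ i ∈ Istar, lam i * |y i| := by
      apply Finset.sum_le_sum
      intro i hi
      calc s i * y i ≤ |s i * y i| := le_abs_self _
        _ = |s i| * |y i| := abs_mul _ _
        _ ≤ lam i * |y i| := mul_le_mul_of_nonneg_right (hsb i hi) (abs_nonneg _)
    rw [h1]
    refine le_trans h2 (le_csSup (wLargestK_bdd n K lam y) ⟨Istar, hfeas, rfl⟩)
  · rw [← hopt]
    rw [← Finset.sum_subset (Finset.subset_univ Istar) (by intro i _ hi; rw [hs3 i hi, zero_mul])]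
    apply Finset.sum_congr rfl
    intro i hi
    by_cases hx : x i = 0
    · simp [hx]
    · rw [hs1 i hi hx, mul_assoc]
      rcases lt_or_gt_of_ne hx with h | h
      · rw [Real.sign_of_neg h, abs_of_neg h]; ring
      · rw [Real.sign_of_pos h, abs_of_pos h]; ring
end
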